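/- Let α = 1 and β > 0, let φ be an analytic self-map of the open unit disk D, and let g be analytic on D. Then the operator C_φU_g, defined by (C_φU_g f)(z) = ∫₀^{φ(z)} f(ξ) g'(ξ) dξ, is bounded from Z^1 to Z^β if and only if (g'∘φ)·φ'' + (g''∘φ)·(φ')² ∈ H_{v_β}^∞ and sup_{z∈D} (1−|z|²)^β log(2/(1−|φ(z)|²)) |g'(φ(z))(φ'(z))²| < ∞. -/

import Mathlib

noncomputable section

/-- The open unit disk in the complex plane. -/
def uD : Set ℂ := Metric.ball 0 1

/-- The Zygmund-type quantity `(1-|z|^2)^a * |f''(z)|`. -/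
def zygS (a : ℝ) (f : ℂ → ℂ) (z : ℂ) : ℝ := (1 - ‖z‖ ^ 2) ^ a * ‖deriv (deriv f) z‖

/-- Membership in the Zygmund-type space `Z^a`. -/
def memZ (a : ℝ) (f : ℂ → ℂ) : Prop :=
  AnalyticOn ℂ f uD ∧ ∃ M : ℝ, ∀ z ∈ uD, zygS a f z ≤ M

/-- The Zygmund-type norm `‖f‖_{Z^a} = |f 0| + |f' 0| + sup_{z ∈ D} (1-|z|^2)^a |f''(z)|`. -/
def zNorm (a : ℝ) (f : ℂ → ℂ) : ℝ := ‖f 0‖ + ‖deriv f 0‖ + sSup (zygS a f '' uD)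

/-- Membership in the weighted space `H^∞_{v_b}` (for `u` analytic on `uD`). -/
def memHv (b : ℝ) (u : ℂ → ℂ) : Prop :=
  ∃ M : ℝ, ∀ z ∈ uD, (1 - ‖z‖ ^ 2) ^ b * ‖u z‖ ≤ M

/-- `T` is a bounded operator from `Z^a` to `Z^b`. -/
def boundedOp (a b : ℝ) (T : (ℂ → ℂ) → ℂ → ℂ) : Prop :=
  (∀ f, memZ a f → memZ b (T f)) ∧
    ∃ C > 0, ∀ f, memZ a f → zNorm b (T f) ≤ C * zNorm a f

/-- `(C_φ U_g f)(z) = ∫₀^{φ(z)} f(ξ) g'(ξ) dξ`, parametrized along the segment from `0` to `φ z`. -/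
def CphiUg (g φ : ℂ → ℂ) (f : ℂ → ℂ) : ℂ → ℂ :=
  fun z => ∫ t in (0:ℝ)..1, φ z * (f ((t : ℂ) * φ z) * deriv g ((t : ℂ) * φ z))


/-! `C_φU_g f = P (f g') ∘ φ` with `P u` the primitive of `u` vanishing at `0`, so
`(C_φU_g f)'' = (f' ∘ φ) (g' ∘ φ) φ'² + (f ∘ φ) ((g' ∘ φ) φ'' + (g'' ∘ φ) φ'²)`.
A function of `Z¹` is bounded by its norm (Taylor's formula with integral remainder), and its
derivative grows at most like `log (2 / (1 - |w|²))` (integrate `f''` along the radius); this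
gives sufficiency. For necessity, the constant `1` yields the first condition, and for `w ∈ D`
the test function with `f' z = log 2 - log (1 - w̄ z)` has `Z¹`-norm at most `3` and
`|f' w| = log (2 / (1 - |w|²))`, which yields the second. -/

open Set Metric intervalIntegral

lemma isOpen_uD : IsOpen uD := isOpen_ball

lemma mem_uD_iff {z : ℂ} : z ∈ uD ↔ ‖z‖ < 1 := mem_ball_zero_iff

lemma zero_mem_uD : (0 : ℂ) ∈ uD := mem_uD_iff.2 (by simp)

lemma ofReal_mul_mem_uD {z : ℂ} (hz : z ∈ uD) {t : ℝ} (ht : t ∈ Icc (0 : ℝ) 1) :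
    (t : ℂ) * z ∈ uD := by
  rw [← Complex.real_smul]
  exact (convex_ball (0 : ℂ) 1).starConvex zero_mem_uD |>.smul_mem hz ht.1 ht.2

lemma one_sub_norm_sq_pos {z : ℂ} (hz : z ∈ uD) : 0 < 1 - ‖z‖ ^ 2 := by
  have := mem_uD_iff.1 hz
  nlinarith [norm_nonneg z]

lemma norm_ofReal_mul {t : ℝ} (ht : 0 ≤ t) (z : ℂ) : ‖(t : ℂ) * z‖ = t * ‖z‖ := by
  rw [norm_mul, Complex.norm_real, Real.norm_of_nonneg ht]

lemma ContinuousOn.comp_ofReal_mul {u : ℂ → ℂ} (hu : ContinuousOn u uD) {z : ℂ} (hz : z ∈ uD) :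
    ContinuousOn (fun t : ℝ => u (t * z)) (Icc 0 1) :=
  hu.comp (by fun_prop) fun _ ht => ofReal_mul_mem_uD hz ht

lemma integral_eq_sub_of_hasDerivAt_ofReal {Φ Φ' : ℂ → ℂ}
    (hΦ : ∀ t ∈ Icc (0 : ℝ) 1, HasDerivAt Φ (Φ' t) t)
    (hΦ' : ContinuousOn (fun t : ℝ => Φ' t) (Icc 0 1)) :
    ∫ t in (0 : ℝ)..1, Φ' t = Φ 1 - Φ 0 := by
  have := integral_eq_sub_of_hasDerivAt (f := fun t : ℝ => Φ t) (a := 0) (b := 1)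
    (fun t ht => (hΦ t (by rwa [uIcc_of_le zero_le_one] at ht)).comp_ofReal)
    ((uIcc_of_le (zero_le_one' ℝ)).symm ▸ hΦ').intervalIntegrable
  simpa using this

def radialPrimitive (u : ℂ → ℂ) (z : ℂ) : ℂ := ∫ t in (0 : ℝ)..1, z * u (t * z)

lemma radialPrimitive_zero (u : ℂ → ℂ) : radialPrimitive u 0 = 0 := by
  simp [radialPrimitive]

lemma radialPrimitive_eq_sub {F u : ℂ → ℂ} (hF : ∀ z ∈ uD, HasDerivAt F (u z) z)
    (hu : ContinuousOn u uD) {z : ℂ} (hz : z ∈ uD) :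
    radialPrimitive u z = F z - F 0 := by
  have hΦ : ∀ t ∈ Icc (0 : ℝ) 1, HasDerivAt (fun ζ => F (ζ * z)) (z * u (t * z)) t := fun t ht =>
    ((hF _ (ofReal_mul_mem_uD hz ht)).comp (t : ℂ) (hasDerivAt_mul_const z)).congr_deriv
      (mul_comm _ _)
  simpa [radialPrimitive] using integral_eq_sub_of_hasDerivAt_ofReal
    (Φ' := fun ζ => z * u (ζ * z)) hΦ (continuousOn_const.mul (hu.comp_ofReal_mul hz))

lemma hasDerivAt_radialPrimitive {u : ℂ → ℂ} (hu : DifferentiableOn ℂ u uD) {z : ℂ}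
    (hz : z ∈ uD) : HasDerivAt (radialPrimitive u) (u z) z := by
  obtain ⟨F, hF⟩ := hu.isExactOn_ball
  have heq : (fun x => F x - F 0) =ᶠ[nhds z] radialPrimitive u := by
    filter_upwards [isOpen_uD.mem_nhds hz] with x hx
    exact (radialPrimitive_eq_sub hF hu.continuousOn hx).symm
  exact ((hF z hz).sub_const (F 0)).congr_of_eventuallyEq heq.symm

lemma analyticOnNhd_radialPrimitive {u : ℂ → ℂ} (hu : DifferentiableOn ℂ u uD) :
    AnalyticOnNhd ℂ (radialPrimitive u) uD :=
  DifferentiableOn.analyticOnNhd (fun _ hz =>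
    (hasDerivAt_radialPrimitive hu hz).differentiableAt.differentiableWithinAt) isOpen_uD

lemma norm_radialPrimitive_le {u : ℂ → ℂ} {z : ℂ} {C : ℝ}
    (h : ∀ t ∈ Ioc (0 : ℝ) 1, ‖u (t * z)‖ ≤ C) : ‖radialPrimitive u z‖ ≤ ‖z‖ * C := by
  refine (norm_integral_le_of_norm_le_const (C := ‖z‖ * C) fun t ht => ?_).trans_eq (by simp)
  rw [uIoc_of_le zero_le_one] at ht
  rw [norm_mul]
  exact mul_le_mul_of_nonneg_left (h t ht) (norm_nonneg z)

section CphiUg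

variable {φ g f : ℂ → ℂ}

lemma CphiUg_eq_comp (g φ f : ℂ → ℂ) :
    CphiUg g φ f = radialPrimitive (fun ζ => f ζ * deriv g ζ) ∘ φ := rfl

lemma hasDerivAt_CphiUg (hφ : AnalyticOnNhd ℂ φ uD) (hφm : MapsTo φ uD uD)
    (hg : AnalyticOnNhd ℂ g uD) (hf : AnalyticOnNhd ℂ f uD) {z : ℂ} (hz : z ∈ uD) :
    HasDerivAt (CphiUg g φ f) (f (φ z) * deriv g (φ z) * deriv φ z) z := by
  rw [CphiUg_eq_comp]
  exact (hasDerivAt_radialPrimitive (hf.mul hg.deriv).differentiableOn (hφm hz)).comp z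
    (hφ z hz).differentiableAt.hasDerivAt

lemma analyticOnNhd_CphiUg (hφ : AnalyticOnNhd ℂ φ uD) (hφm : MapsTo φ uD uD)
    (hg : AnalyticOnNhd ℂ g uD) (hf : AnalyticOnNhd ℂ f uD) :
    AnalyticOnNhd ℂ (CphiUg g φ f) uD :=
  (analyticOnNhd_radialPrimitive (hf.mul hg.deriv).differentiableOn).comp hφ hφm

lemma deriv_deriv_CphiUg (hφ : AnalyticOnNhd ℂ φ uD) (hφm : MapsTo φ uD uD)
    (hg : AnalyticOnNhd ℂ g uD) (hf : AnalyticOnNhd ℂ f uD) {z : ℂ} (hz : z ∈ uD) :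
    deriv (deriv (CphiUg g φ f)) z =
      deriv f (φ z) * (deriv g (φ z) * deriv φ z ^ 2) +
        f (φ z) * (deriv g (φ z) * deriv (deriv φ) z + deriv (deriv g) (φ z) * deriv φ z ^ 2) := by
  have hderiv : deriv (CphiUg g φ f) =ᶠ[nhds z] fun w => f (φ w) * deriv g (φ w) * deriv φ w := by
    filter_upwards [isOpen_uD.mem_nhds hz] with w hw
    exact (hasDerivAt_CphiUg hφ hφm hg hf hw).deriv
  have hφ' := (hφ z hz).differentiableAt.hasDerivAt
  have hfφ : HasDerivAt (fun w => f (φ w)) (deriv f (φ z) * deriv φ z) z :=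
    (hf _ (hφm hz)).differentiableAt.hasDerivAt.comp z hφ'
  have hgφ : HasDerivAt (fun w => deriv g (φ w)) (deriv (deriv g) (φ z) * deriv φ z) z :=
    (hg.deriv _ (hφm hz)).differentiableAt.hasDerivAt.comp z hφ'
  rw [hderiv.deriv_eq]
  refine ((hfφ.mul hgφ).mul (hφ.deriv z hz).differentiableAt.hasDerivAt).deriv.trans ?_
  simp only [Pi.mul_apply]
  ring

end CphiUg

section growth

lemma one_sub_mul_pos {t r : ℝ} (ht : t ∈ Icc (0 : ℝ) 1) (hr : r < 1) : 0 < 1 - t * r := by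
  rcases le_or_gt r 0 with hr0 | hr0
  · nlinarith [ht.1]
  · nlinarith [ht.2]

lemma integral_div_one_sub_mul {r : ℝ} (hr : r < 1) :
    ∫ t in (0 : ℝ)..1, r / (1 - t * r) = -Real.log (1 - r) := by
  have hpos : ∀ t ∈ uIcc (0 : ℝ) 1, 0 < 1 - t * r := fun t ht =>
    one_sub_mul_pos (by rwa [uIcc_of_le zero_le_one] at ht) hr
  have hderiv : ∀ t ∈ uIcc (0 : ℝ) 1,
      HasDerivAt (fun t => -Real.log (1 - t * r)) (r / (1 - t * r)) t := by
    intro t ht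
    have := ((hasDerivAt_mul_const r).const_sub 1).log (hpos t ht).ne'
    exact this.neg.congr_deriv (by ring)
  have hcont : ContinuousOn (fun t : ℝ => r / (1 - t * r)) (uIcc 0 1) :=
    continuousOn_const.div (by fun_prop) fun t ht => (hpos t ht).ne'
  rw [integral_eq_sub_of_hasDerivAt hderiv hcont.intervalIntegrable]
  simp

lemma neg_log_one_sub_le_log_two_div {r : ℝ} (hr0 : 0 ≤ r) (hr1 : r < 1) :
    -Real.log (1 - r) ≤ Real.log (2 / (1 - r ^ 2)) := by
  rw [← Real.log_inv]
  apply Real.log_le_log (inv_pos.2 (by linarith))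
  rw [inv_eq_one_div, div_le_div_iff₀ (by linarith) (by nlinarith)]
  nlinarith

variable {f : ℂ → ℂ} {M : ℝ} {w : ℂ}

lemma sub_sub_mul_deriv_eq_integral (hf : AnalyticOnNhd ℂ f uD) (hw : w ∈ uD) :
    f w - f 0 - w * deriv f 0 =
      ∫ t in (0 : ℝ)..1, (1 - (t : ℂ)) * w ^ 2 * deriv (deriv f) (t * w) := by
  have hΦ : ∀ t ∈ Icc (0 : ℝ) 1, HasDerivAt (fun ζ => f (ζ * w) + (1 - ζ) * w * deriv f (ζ * w))
      ((1 - (t : ℂ)) * w ^ 2 * deriv (deriv f) (t * w)) t := by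
    intro t ht
    have hmem := ofReal_mul_mem_uD hw ht
    have h₀ := (hf _ hmem).differentiableAt.hasDerivAt.comp (t : ℂ) (hasDerivAt_mul_const w)
    have h₁ := (hf.deriv _ hmem).differentiableAt.hasDerivAt.comp (t : ℂ) (hasDerivAt_mul_const w)
    refine (h₀.add ((((hasDerivAt_id _).const_sub 1).mul_const w).mul h₁)).congr_deriv ?_
    simp only [Function.comp_apply]
    ring
  have hcont : ContinuousOn (fun t : ℝ => (1 - (t : ℂ)) * w ^ 2 * deriv (deriv f) (t * w))
      (Icc 0 1) :=
    (by fun_prop : Continuous fun t : ℝ => (1 - (t : ℂ)) * w ^ 2).continuousOn.mul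
      (hf.deriv.deriv.continuousOn.comp_ofReal_mul hw)
  rw [integral_eq_sub_of_hasDerivAt_ofReal
    (Φ' := fun ζ => (1 - ζ) * w ^ 2 * deriv (deriv f) (ζ * w)) hΦ hcont]
  simp only [one_mul, sub_self, zero_mul, add_zero, sub_zero]
  ring

lemma norm_sub_sub_mul_deriv_le (hf : AnalyticOnNhd ℂ f uD)
    (hM : ∀ z ∈ uD, (1 - ‖z‖ ^ 2) * ‖deriv (deriv f) z‖ ≤ M) (hw : w ∈ uD) :
    ‖f w - f 0 - w * deriv f 0‖ ≤ M := by
  rw [sub_sub_mul_deriv_eq_integral hf hw]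
  refine (norm_integral_le_of_norm_le_const (C := M) fun t ht => ?_).trans_eq (by simp)
  rw [uIoc_of_le zero_le_one] at ht
  have ht' : t ∈ Icc (0 : ℝ) 1 := Ioc_subset_Icc_self ht
  have hMt := hM _ (ofReal_mul_mem_uD hw ht')
  rw [norm_ofReal_mul ht'.1, mul_pow] at hMt
  have h1t : ‖1 - (t : ℂ)‖ = 1 - t := by
    rw [← Complex.ofReal_one, ← Complex.ofReal_sub, Complex.norm_real,
      Real.norm_of_nonneg (sub_nonneg.2 ht.2)]
  rw [norm_mul, norm_mul, norm_pow, h1t]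
  have hweight : (1 - t) * ‖w‖ ^ 2 ≤ 1 - t ^ 2 * ‖w‖ ^ 2 := by
    nlinarith [ht'.1, ht'.2, norm_nonneg w, mem_uD_iff.1 hw,
      mul_nonneg ht'.1 (sub_nonneg.2 ht'.2)]
  nlinarith [norm_nonneg (deriv (deriv f) (t * w))]

lemma norm_deriv_sub_deriv_zero_le (hf : AnalyticOnNhd ℂ f uD)
    (hM : ∀ z ∈ uD, (1 - ‖z‖ ^ 2) * ‖deriv (deriv f) z‖ ≤ M) (hw : w ∈ uD) :
    ‖deriv f w - deriv f 0‖ ≤ M * Real.log (2 / (1 - ‖w‖ ^ 2)) := by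
  have hM0 : 0 ≤ M := by
    have h0 := hM 0 zero_mem_uD
    rw [norm_zero, zero_pow two_ne_zero, sub_zero, one_mul] at h0
    exact (norm_nonneg _).trans h0
  have hw1 := mem_uD_iff.1 hw
  have hbound : ∀ t ∈ Ioc (0 : ℝ) 1,
      ‖w * deriv (deriv f) (t * w)‖ ≤ M * (‖w‖ / (1 - t * ‖w‖)) := by
    intro t ht
    have ht' : t ∈ Icc (0 : ℝ) 1 := Ioc_subset_Icc_self ht
    have hpos := one_sub_mul_pos ht' hw1
    have hMt := hM _ (ofReal_mul_mem_uD hw ht')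
    rw [norm_ofReal_mul ht'.1, mul_pow] at hMt
    rw [norm_mul, mul_div_assoc', le_div_iff₀ hpos]
    have htr : t * ‖w‖ ≤ 1 := by nlinarith [ht'.2, norm_nonneg w]
    have htr0 : 0 ≤ t * ‖w‖ := mul_nonneg ht'.1 (norm_nonneg w)
    have hle : ‖deriv (deriv f) (t * w)‖ * (1 - t * ‖w‖) ≤ M := by
      nlinarith [norm_nonneg (deriv (deriv f) (t * w))]
    nlinarith [norm_nonneg w]
  have hcont : ContinuousOn (fun t : ℝ => M * (‖w‖ / (1 - t * ‖w‖))) (uIcc 0 1) :=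
    continuousOn_const.mul (continuousOn_const.div (by fun_prop) fun t ht =>
      (one_sub_mul_pos (by rwa [uIcc_of_le zero_le_one] at ht) hw1).ne')
  have hFTC : deriv f w - deriv f 0 = radialPrimitive (deriv (deriv f)) w :=
    (radialPrimitive_eq_sub (fun z hz => (hf.deriv z hz).differentiableAt.hasDerivAt)
      hf.deriv.deriv.continuousOn hw).symm
  calc ‖deriv f w - deriv f 0‖
      ≤ ∫ t in (0 : ℝ)..1, M * (‖w‖ / (1 - t * ‖w‖)) := by
        rw [hFTC]
        exact norm_integral_le_of_norm_le zero_le_one (.of_forall hbound)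
          hcont.intervalIntegrable
    _ = M * -Real.log (1 - ‖w‖) := by rw [integral_const_mul, integral_div_one_sub_mul hw1]
    _ ≤ M * Real.log (2 / (1 - ‖w‖ ^ 2)) :=
        mul_le_mul_of_nonneg_left (neg_log_one_sub_le_log_two_div (norm_nonneg w) hw1) hM0

end growth

lemma log_two_le_log_two_div {z : ℂ} (hz : z ∈ uD) :
    Real.log 2 ≤ Real.log (2 / (1 - ‖z‖ ^ 2)) := by
  have hpos := one_sub_norm_sq_pos hz
  refine Real.log_le_log two_pos ((le_div_iff₀ hpos).2 ?_)
  nlinarith [norm_nonneg z]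

section zygmund

variable {a : ℝ} {f : ℂ → ℂ} {z : ℂ}

lemma memZ.analyticOnNhd (hf : memZ a f) : AnalyticOnNhd ℂ f uD :=
  isOpen_uD.analyticOn_iff_analyticOnNhd.1 hf.1

lemma zygS_one (f : ℂ → ℂ) (z : ℂ) : zygS 1 f z = (1 - ‖z‖ ^ 2) * ‖deriv (deriv f) z‖ := by
  rw [zygS, Real.rpow_one]

lemma zygS_nonneg (hz : z ∈ uD) : 0 ≤ zygS a f z :=
  mul_nonneg (Real.rpow_nonneg (one_sub_norm_sq_pos hz).le a) (norm_nonneg _)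

lemma zygS_le_sSup (hf : memZ a f) (hz : z ∈ uD) : zygS a f z ≤ sSup (zygS a f '' uD) := by
  obtain ⟨M, hM⟩ := hf.2
  exact le_csSup ⟨M, by rintro _ ⟨ζ, hζ, rfl⟩; exact hM ζ hζ⟩ (mem_image_of_mem _ hz)

lemma sSup_zygS_nonneg (hf : memZ a f) : 0 ≤ sSup (zygS a f '' uD) :=
  (zygS_nonneg zero_mem_uD).trans (zygS_le_sSup hf zero_mem_uD)

lemma zNorm_nonneg (hf : memZ a f) : 0 ≤ zNorm a f :=
  add_nonneg (add_nonneg (norm_nonneg _) (norm_nonneg _)) (sSup_zygS_nonneg hf)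

lemma zygS_le_zNorm (hf : memZ a f) (hz : z ∈ uD) : zygS a f z ≤ zNorm a f := by
  have := zygS_le_sSup hf hz
  rw [zNorm]
  linarith [norm_nonneg (f 0), norm_nonneg (deriv f 0)]

lemma zNorm_le_of_forall_zygS_le {m : ℝ} (h : ∀ z ∈ uD, zygS a f z ≤ m) :
    zNorm a f ≤ ‖f 0‖ + ‖deriv f 0‖ + m := by
  rw [zNorm]
  gcongr
  exact csSup_le ⟨_, mem_image_of_mem _ zero_mem_uD⟩ (by rintro _ ⟨ζ, hζ, rfl⟩; exact h ζ hζ)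

lemma norm_le_zNorm_one (hf : memZ 1 f) (hz : z ∈ uD) : ‖f z‖ ≤ zNorm 1 f := by
  have hM : ∀ ζ ∈ uD, (1 - ‖ζ‖ ^ 2) * ‖deriv (deriv f) ζ‖ ≤ sSup (zygS 1 f '' uD) :=
    fun ζ hζ => zygS_one f ζ ▸ zygS_le_sSup hf hζ
  have htaylor := norm_sub_sub_mul_deriv_le hf.analyticOnNhd hM hz
  have hlin : ‖z * deriv f 0‖ ≤ ‖deriv f 0‖ := by
    rw [norm_mul]
    exact mul_le_of_le_one_left (norm_nonneg _) (mem_uD_iff.1 hz).le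
  rw [zNorm]
  calc ‖f z‖ = ‖(f z - f 0 - z * deriv f 0) + f 0 + z * deriv f 0‖ := by ring_nf
    _ ≤ ‖f z - f 0 - z * deriv f 0‖ + ‖f 0‖ + ‖z * deriv f 0‖ := norm_add₃_le
    _ ≤ _ := by linarith

lemma norm_deriv_le_zNorm_one (hf : memZ 1 f) (hz : z ∈ uD) :
    ‖deriv f z‖ ≤ zNorm 1 f * (1 + Real.log (2 / (1 - ‖z‖ ^ 2))) := by
  have hM : ∀ ζ ∈ uD, (1 - ‖ζ‖ ^ 2) * ‖deriv (deriv f) ζ‖ ≤ zNorm 1 f :=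
    fun ζ hζ => zygS_one f ζ ▸ zygS_le_zNorm hf hζ
  have hgrowth := norm_deriv_sub_deriv_zero_le hf.analyticOnNhd hM hz
  have hderiv0 : ‖deriv f 0‖ ≤ zNorm 1 f := by
    rw [zNorm]; linarith [norm_nonneg (f 0), sSup_zygS_nonneg hf]
  calc ‖deriv f z‖ ≤ ‖deriv f z - deriv f 0‖ + ‖deriv f 0‖ := norm_le_norm_sub_add _ _
    _ ≤ _ := by linarith

end zygmund

section sufficiency

variable {β : ℝ} {φ g f : ℂ → ℂ}

lemma zygS_CphiUg_le (hφ : AnalyticOnNhd ℂ φ uD) (hφm : MapsTo φ uD uD)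
    (hg : AnalyticOnNhd ℂ g uD) {M₁ M₂ : ℝ}
    (hM₁ : ∀ z ∈ uD, (1 - ‖z‖ ^ 2) ^ β *
      ‖deriv g (φ z) * deriv (deriv φ) z + deriv (deriv g) (φ z) * deriv φ z ^ 2‖ ≤ M₁)
    (hM₂ : ∀ z ∈ uD, (1 - ‖z‖ ^ 2) ^ β * Real.log (2 / (1 - ‖φ z‖ ^ 2)) *
      ‖deriv g (φ z) * deriv φ z ^ 2‖ ≤ M₂)
    (hf : memZ 1 f) {z : ℂ} (hz : z ∈ uD) :
    zygS β (CphiUg g φ f) z ≤ zNorm 1 f * (M₂ / Real.log 2 + M₂ + M₁) := by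
  set W := (1 - ‖z‖ ^ 2) ^ β
  set L := Real.log (2 / (1 - ‖φ z‖ ^ 2))
  set G := deriv g (φ z) * deriv φ z ^ 2
  set H := deriv g (φ z) * deriv (deriv φ) z + deriv (deriv g) (φ z) * deriv φ z ^ 2
  have hW : 0 ≤ W := Real.rpow_nonneg (one_sub_norm_sq_pos hz).le β
  have hN := zNorm_nonneg hf
  have hL := log_two_le_log_two_div (hφm hz)
  have hlog2 : 0 < Real.log 2 := Real.log_pos one_lt_two
  have hG : W * ‖G‖ ≤ M₂ / Real.log 2 := by
    rw [le_div_iff₀ hlog2]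
    calc W * ‖G‖ * Real.log 2 ≤ W * ‖G‖ * L := by gcongr
      _ = W * L * ‖G‖ := by ring
      _ ≤ M₂ := hM₂ z hz
  calc zygS β (CphiUg g φ f) z = W * ‖deriv f (φ z) * G + f (φ z) * H‖ := by
        rw [zygS, deriv_deriv_CphiUg hφ hφm hg hf.analyticOnNhd hz]
    _ ≤ W * (‖deriv f (φ z)‖ * ‖G‖ + ‖f (φ z)‖ * ‖H‖) := by
        gcongr
        exact (norm_add_le _ _).trans_eq (by rw [norm_mul _ G, norm_mul _ H])
    _ = ‖deriv f (φ z)‖ * (W * ‖G‖) + ‖f (φ z)‖ * (W * ‖H‖) := by ring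
    _ ≤ zNorm 1 f * (1 + L) * (W * ‖G‖) + zNorm 1 f * M₁ := by
        gcongr
        · exact norm_deriv_le_zNorm_one hf (hφm hz)
        · exact norm_le_zNorm_one hf (hφm hz)
        · exact hM₁ z hz
    _ = zNorm 1 f * (W * ‖G‖ + W * L * ‖G‖ + M₁) := by ring
    _ ≤ zNorm 1 f * (M₂ / Real.log 2 + M₂ + M₁) := by
        gcongr
        · exact hM₂ z hz

lemma norm_CphiUg_zero_le (hφm : MapsTo φ uD uD) {D : ℝ}
    (hD : ∀ ζ ∈ closedBall (0 : ℂ) ‖φ 0‖, ‖deriv g ζ‖ ≤ D) (hf : memZ 1 f) :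
    ‖CphiUg g φ f 0‖ ≤ zNorm 1 f * D := by
  have hφ0 := hφm zero_mem_uD
  have hbound : ∀ t ∈ Ioc (0 : ℝ) 1, ‖f (t * φ 0) * deriv g (t * φ 0)‖ ≤ zNorm 1 f * D := by
    intro t ht
    have hseg : ‖(t : ℂ) * φ 0‖ ≤ ‖φ 0‖ := by
      rw [norm_ofReal_mul ht.1.le]
      exact mul_le_of_le_one_left (norm_nonneg _) ht.2
    rw [norm_mul]
    exact mul_le_mul (norm_le_zNorm_one hf (ofReal_mul_mem_uD hφ0 (Ioc_subset_Icc_self ht)))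
      (hD _ (mem_closedBall_zero_iff.2 hseg)) (norm_nonneg _) (zNorm_nonneg hf)
  have hND : 0 ≤ zNorm 1 f * D := (norm_nonneg _).trans (hbound 1 (by simp))
  calc ‖CphiUg g φ f 0‖ ≤ ‖φ 0‖ * (zNorm 1 f * D) :=
        norm_radialPrimitive_le (u := fun ζ => f ζ * deriv g ζ) hbound
    _ ≤ zNorm 1 f * D := mul_le_of_le_one_left hND (mem_uD_iff.1 hφ0).le

theorem boundedOp_CphiUg_of_bounds (hφ : AnalyticOnNhd ℂ φ uD) (hφm : MapsTo φ uD uD)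
    (hg : AnalyticOnNhd ℂ g uD) {M₁ M₂ : ℝ}
    (hM₁ : ∀ z ∈ uD, (1 - ‖z‖ ^ 2) ^ β *
      ‖deriv g (φ z) * deriv (deriv φ) z + deriv (deriv g) (φ z) * deriv φ z ^ 2‖ ≤ M₁)
    (hM₂ : ∀ z ∈ uD, (1 - ‖z‖ ^ 2) ^ β * Real.log (2 / (1 - ‖φ z‖ ^ 2)) *
      ‖deriv g (φ z) * deriv φ z ^ 2‖ ≤ M₂) :
    boundedOp 1 β (CphiUg g φ) := by
  set K := M₂ / Real.log 2 + M₂ + M₁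
  obtain ⟨D, hD⟩ := (isCompact_closedBall (0 : ℂ) ‖φ 0‖).exists_bound_of_continuousOn
    (hg.deriv.continuousOn.mono fun ζ hζ =>
      mem_uD_iff.2 ((mem_closedBall_zero_iff.1 hζ).trans_lt (mem_uD_iff.1 (hφm zero_mem_uD))))
  refine ⟨fun f hf => ⟨(analyticOnNhd_CphiUg hφ hφm hg hf.analyticOnNhd).analyticOn,
      _, fun z hz => zygS_CphiUg_le hφ hφm hg hM₁ hM₂ hf hz⟩,
    |D| + ‖deriv g (φ 0)‖ * ‖deriv φ 0‖ + |K| + 1, by positivity, fun f hf => ?_⟩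
  have hN := zNorm_nonneg hf
  have hvalue := norm_CphiUg_zero_le hφm hD hf
  have hderiv : ‖deriv (CphiUg g φ f) 0‖ ≤ zNorm 1 f * (‖deriv g (φ 0)‖ * ‖deriv φ 0‖) := by
    rw [(hasDerivAt_CphiUg hφ hφm hg hf.analyticOnNhd zero_mem_uD).deriv, norm_mul, norm_mul,
      mul_assoc]
    gcongr
    exact norm_le_zNorm_one hf (hφm zero_mem_uD)
  have hzyg := zNorm_le_of_forall_zygS_le fun z hz => zygS_CphiUg_le hφ hφm hg hM₁ hM₂ hf hz
  have hD' := mul_le_mul_of_nonneg_left (le_abs_self D) hN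
  have hK' := mul_le_mul_of_nonneg_left (le_abs_self K) hN
  linarith

end sufficiency

section logTest

variable {c z : ℂ}

def logTest (c : ℂ) : ℂ → ℂ := radialPrimitive fun z => Real.log 2 - Complex.log (1 - c * z)

lemma one_sub_mul_mem_slitPlane (hc : ‖c‖ ≤ 1) (hz : z ∈ uD) :
    1 - c * z ∈ Complex.slitPlane := by
  rw [sub_eq_add_neg]
  refine Complex.mem_slitPlane_of_norm_lt_one ?_
  rw [norm_neg, norm_mul]
  exact (mul_le_of_le_one_left (norm_nonneg z) hc).trans_lt (mem_uD_iff.1 hz)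

lemma hasDerivAt_log_two_sub_log (hc : ‖c‖ ≤ 1) (hz : z ∈ uD) :
    HasDerivAt (fun z => (Real.log 2 : ℂ) - Complex.log (1 - c * z)) (c / (1 - c * z)) z := by
  have := ((hasDerivAt_id z).const_mul c).const_sub 1 |>.clog (one_sub_mul_mem_slitPlane hc hz)
  exact (this.const_sub _).congr_deriv (by simp only [mul_one, id_eq, neg_div, neg_neg])

lemma differentiableOn_log_two_sub_log (hc : ‖c‖ ≤ 1) :
    DifferentiableOn ℂ (fun z => (Real.log 2 : ℂ) - Complex.log (1 - c * z)) uD := fun _ hz =>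
  (hasDerivAt_log_two_sub_log hc hz).differentiableAt.differentiableWithinAt

lemma deriv_logTest (hc : ‖c‖ ≤ 1) (hz : z ∈ uD) :
    deriv (logTest c) z = Real.log 2 - Complex.log (1 - c * z) :=
  (hasDerivAt_radialPrimitive (differentiableOn_log_two_sub_log hc) hz).deriv

lemma deriv_deriv_logTest (hc : ‖c‖ ≤ 1) (hz : z ∈ uD) :
    deriv (deriv (logTest c)) z = c / (1 - c * z) := by
  have heq : deriv (logTest c) =ᶠ[nhds z] fun z => Real.log 2 - Complex.log (1 - c * z) := by
    filter_upwards [isOpen_uD.mem_nhds hz] with ζ hζ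
    exact deriv_logTest hc hζ
  rw [heq.deriv_eq, (hasDerivAt_log_two_sub_log hc hz).deriv]

lemma zygS_logTest_le (hc : ‖c‖ ≤ 1) (hz : z ∈ uD) : zygS 1 (logTest c) z ≤ 2 := by
  have hz1 := mem_uD_iff.1 hz
  have hlower : 1 - ‖z‖ ≤ ‖1 - c * z‖ := by
    have := norm_sub_norm_le (1 : ℂ) (c * z)
    rw [norm_one, norm_mul] at this
    nlinarith [mul_le_of_le_one_left (norm_nonneg z) hc]
  have hc' : (1 - ‖z‖ ^ 2) * ‖c‖ ≤ 1 - ‖z‖ ^ 2 :=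
    mul_le_of_le_one_right (one_sub_norm_sq_pos hz).le hc
  rw [zygS_one, deriv_deriv_logTest hc hz, norm_div, ← mul_div_assoc,
    div_le_iff₀ ((sub_pos.2 hz1).trans_le hlower)]
  nlinarith [norm_nonneg z]

lemma memZ_logTest (hc : ‖c‖ ≤ 1) : memZ 1 (logTest c) :=
  ⟨(analyticOnNhd_radialPrimitive (differentiableOn_log_two_sub_log hc)).analyticOn,
    2, fun _ hz => zygS_logTest_le hc hz⟩

lemma zNorm_logTest_le (hc : ‖c‖ ≤ 1) : zNorm 1 (logTest c) ≤ 3 := by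
  refine (zNorm_le_of_forall_zygS_le fun _ hz => zygS_logTest_le hc hz).trans ?_
  rw [deriv_logTest hc zero_mem_uD, logTest, radialPrimitive_zero]
  simp only [norm_zero, mul_zero, sub_zero, Complex.log_one, Complex.norm_real,
    Real.norm_of_nonneg (Real.log_nonneg one_le_two)]
  linarith [Real.log_two_lt_d9]

lemma norm_deriv_logTest_conj {w : ℂ} (hw : w ∈ uD) :
    ‖deriv (logTest (starRingEnd ℂ w)) w‖ = Real.log (2 / (1 - ‖w‖ ^ 2)) := by
  have hpos := one_sub_norm_sq_pos hw
  have hconj : 1 - starRingEnd ℂ w * w = ((1 - ‖w‖ ^ 2 : ℝ) : ℂ) := by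
    rw [mul_comm, Complex.mul_conj, Complex.normSq_eq_norm_sq]
    push_cast
    ring
  have hc : ‖starRingEnd ℂ w‖ ≤ 1 := by simpa using (mem_uD_iff.1 hw).le
  rw [deriv_logTest hc hw, hconj, ← Complex.ofReal_log hpos.le,
    ← Complex.ofReal_sub, ← Real.log_div two_ne_zero hpos.ne', Complex.norm_real,
    Real.norm_of_nonneg (Real.log_nonneg ((le_div_iff₀ hpos).2 (by nlinarith [norm_nonneg w])))]

end logTest

section necessity

variable {β : ℝ} {φ g : ℂ → ℂ}

lemma memHv_of_boundedOp (hφ : AnalyticOnNhd ℂ φ uD) (hφm : MapsTo φ uD uD)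
    (hg : AnalyticOnNhd ℂ g uD) (h : boundedOp 1 β (CphiUg g φ)) :
    memHv β fun z =>
      deriv g (φ z) * deriv (deriv φ) z + deriv (deriv g) (φ z) * deriv φ z ^ 2 := by
  have hone : memZ 1 fun _ : ℂ => (1 : ℂ) :=
    ⟨analyticOn_const, 0, fun z _ => by simp [zygS]⟩
  obtain ⟨M, hM⟩ := (h.1 _ hone).2
  refine ⟨M, fun z hz => ?_⟩
  have := hM z hz
  rwa [zygS, deriv_deriv_CphiUg hφ hφm hg hone.analyticOnNhd hz, deriv_const, zero_mul,
    zero_add, one_mul] at this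

lemma log_bound_of_boundedOp (hφ : AnalyticOnNhd ℂ φ uD) (hφm : MapsTo φ uD uD)
    (hg : AnalyticOnNhd ℂ g uD) (h : boundedOp 1 β (CphiUg g φ)) {M₁ : ℝ}
    (hM₁ : ∀ z ∈ uD, (1 - ‖z‖ ^ 2) ^ β *
      ‖deriv g (φ z) * deriv (deriv φ) z + deriv (deriv g) (φ z) * deriv φ z ^ 2‖ ≤ M₁) :
    ∃ M : ℝ, ∀ z ∈ uD, (1 - ‖z‖ ^ 2) ^ β * Real.log (2 / (1 - ‖φ z‖ ^ 2)) *
      ‖deriv g (φ z) * deriv φ z ^ 2‖ ≤ M := by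
  obtain ⟨hmaps, C, hC, hbound⟩ := h
  refine ⟨C * 3 + 3 * M₁, fun z hz => ?_⟩
  have hw := hφm hz
  have hc : ‖starRingEnd ℂ (φ z)‖ ≤ 1 := by simpa using (mem_uD_iff.1 hw).le
  set f := logTest (starRingEnd ℂ (φ z))
  set W := (1 - ‖z‖ ^ 2) ^ β
  set G := deriv g (φ z) * deriv φ z ^ 2
  set H := deriv g (φ z) * deriv (deriv φ) z + deriv (deriv g) (φ z) * deriv φ z ^ 2
  have hW : 0 ≤ W := Real.rpow_nonneg (one_sub_norm_sq_pos hz).le β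
  have hf := memZ_logTest hc
  have hsplit : deriv f (φ z) * G = deriv (deriv (CphiUg g φ f)) z - f (φ z) * H := by
    rw [deriv_deriv_CphiUg hφ hφm hg hf.analyticOnNhd hz]
    ring
  have hTf : W * ‖deriv (deriv (CphiUg g φ f)) z‖ ≤ C * 3 :=
    (zygS_le_zNorm (hmaps f hf) hz).trans ((hbound f hf).trans
      (mul_le_mul_of_nonneg_left (zNorm_logTest_le hc) hC.le))
  have hfH : ‖f (φ z)‖ * (W * ‖H‖) ≤ 3 * M₁ :=
    mul_le_mul ((norm_le_zNorm_one hf hw).trans (zNorm_logTest_le hc)) (hM₁ z hz)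
      (mul_nonneg hW (norm_nonneg _)) (by norm_num)
  calc W * Real.log (2 / (1 - ‖φ z‖ ^ 2)) * ‖G‖ = W * ‖deriv f (φ z) * G‖ := by
        rw [norm_mul _ G, (norm_deriv_logTest_conj hw : ‖deriv f (φ z)‖ = _), mul_assoc]
    _ ≤ W * ‖deriv (deriv (CphiUg g φ f)) z‖ + ‖f (φ z)‖ * (W * ‖H‖) := by
        rw [hsplit]
        refine (mul_le_mul_of_nonneg_left (norm_sub_le _ _) hW).trans_eq ?_
        rw [norm_mul]
        ring
    _ ≤ C * 3 + 3 * M₁ := add_le_add hTf hfH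

end necessity

theorem stmt_7_general (β : ℝ)
    (φ g : ℂ → ℂ) (hφ : AnalyticOn ℂ φ uD) (hφm : Set.MapsTo φ uD uD)
    (hg : AnalyticOn ℂ g uD) :
    boundedOp 1 β (CphiUg g φ) ↔
      (memHv β (fun z => deriv g (φ z) * deriv (deriv φ) z + deriv (deriv g) (φ z) * (deriv φ z) ^ 2) ∧ (∃ M : ℝ, ∀ z ∈ uD, (1 - ‖z‖ ^ 2) ^ β * Real.log (2 / (1 - ‖φ z‖ ^ 2)) * ‖deriv g (φ z) * (deriv φ z) ^ 2‖ ≤ M)) := by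
  rw [isOpen_uD.analyticOn_iff_analyticOnNhd] at hφ hg
  constructor
  · intro h
    obtain ⟨M₁, hM₁⟩ := memHv_of_boundedOp hφ hφm hg h
    exact ⟨⟨M₁, hM₁⟩, log_bound_of_boundedOp hφ hφm hg h hM₁⟩
  · rintro ⟨⟨M₁, hM₁⟩, M₂, hM₂⟩
    exact boundedOp_CphiUg_of_bounds hφ hφm hg hM₁ hM₂

theorem stmt_7 (α β : ℝ) (hα : α = 1) (hβ : 0 < β)
    (φ g : ℂ → ℂ) (hφ : AnalyticOn ℂ φ uD) (hφm : Set.MapsTo φ uD uD)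
    (hg : AnalyticOn ℂ g uD) :
    boundedOp 1 β (CphiUg g φ) ↔
      (memHv β (fun z => deriv g (φ z) * deriv (deriv φ) z + deriv (deriv g) (φ z) * (deriv φ z) ^ 2) ∧ (∃ M : ℝ, ∀ z ∈ uD, (1 - ‖z‖ ^ 2) ^ β * Real.log (2 / (1 - ‖φ z‖ ^ 2)) * ‖deriv g (φ z) * (deriv φ z) ^ 2‖ ≤ M)) :=
  stmt_7_general β φ g hφ hφm hg
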